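/- arXiv:2209.03510 — 5 statements merged into one kernel-verified Lean document; each statement's English description precedes it below -/
import Mathlib

section
/- Let D be a bounded domain in ℂⁿ and p > 0. If the p-Bergman kernel B_{D,p} is exhaustive (i.e., for every c ∈ ℝ the sublevel set {z ∈ D : B_{D,p}(z) ≤ c} is compact), then D is A^p-complete. -/
open MeasureTheory

noncomputable def apNorm (n : ℕ) (p : ℝ) (D : Set (Fin n → ℂ))
    (φ : (Fin n → ℂ) → ℂ) : ℝ :=
  (∫ z in D, ‖φ z‖ ^ p) ^ (1 / p)

def MemAp (n : ℕ) (p : ℝ) (D : Set (Fin n → ℂ)) (φ : (Fin n → ℂ) → ℂ) : Prop :=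
  DifferentiableOn ℂ φ D ∧ IntegrableOn (fun z => ‖φ z‖ ^ p) D volume

/-- The restriction map `A^p(D̃) → A^p(D)` (for `D ⊆ D̃`) is a linear isometry:
it is norm preserving and surjective. -/
def RestrictionIsometry (n : ℕ) (p : ℝ) (D D' : Set (Fin n → ℂ)) : Prop :=
  (∀ ψ : (Fin n → ℂ) → ℂ, MemAp n p D' ψ →
      MemAp n p D ψ ∧ apNorm n p D ψ = apNorm n p D' ψ) ∧
  (∀ φ : (Fin n → ℂ) → ℂ, MemAp n p D φ →
      ∃ ψ : (Fin n → ℂ) → ℂ, MemAp n p D' ψ ∧ ∀ z ∈ D, ψ z = φ z)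

/-- `D` is `A^p`-complete: there is no strictly larger domain `D̃ ⊋ D` such that the
restriction map `A^p(D̃) → A^p(D)` is a linear isometry. -/
def ApComplete (n : ℕ) (p : ℝ) (D : Set (Fin n → ℂ)) : Prop :=
  ¬ ∃ D' : Set (Fin n → ℂ), IsOpen D' ∧ IsConnected D' ∧ D ⊆ D' ∧ D ≠ D' ∧
      RestrictionIsometry n p D D'

/-- The `p`-Bergman kernel. -/
noncomputable def pBergman (n : ℕ) (p : ℝ) (D : Set (Fin n → ℂ))
    (z : Fin n → ℂ) : ℝ :=
  sSup {x : ℝ | ∃ φ : (Fin n → ℂ) → ℂ, MemAp n p D φ ∧ (∃ w ∈ D, φ w ≠ 0) ∧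
    x = ‖φ z‖ ^ 2 / (apNorm n p D φ) ^ 2}

/-!
Suppose `D ⊊ D'` with `D'` a domain and `A^p(D') → A^p(D)` an isometric isomorphism. Since `D'`
is connected, it contains a boundary point `z₀` of `D`. Near `z₀`, holomorphic functions on `D'`
with `∫ |ψ|^p ≤ 1` are uniformly bounded: for `p ≥ 1` this is the sub-mean value property of `|ψ|`
on polydiscs together with `|ψ| ≤ 1 + |ψ|^p`. For `p < 1`, let `z₁` maximise
`dist(·, ∂P)^{2n} |ψ|^p` over a polydisc `P`; on the polydisc around `z₁` of half its distance to
`∂P` we have `|ψ| ≤ c |ψ(z₁)|` with `c = 4^{n/p}`, hence `|ψ| ≤ c^{1-p} |ψ(z₁)|^{1-p} |ψ|^p`, and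
the sub-mean value property there bounds the maximum by `4^{n/p} π^{-n} ∫_P |ψ|^p`.
Since every `φ ∈ A^p(D)` extends to `D'` with the same norm, `B_{D,p}` is then bounded on `D`
near `z₀`, so a sublevel set of `B_{D,p}` accumulates at `z₀ ∉ D` and is not compact.
-/

open Metric Set Real

theorem Complex.polarCoord_symm_eq_circleMap (p : ℝ × ℝ) :
    Complex.polarCoord.symm p = circleMap 0 p.1 p.2 := by
  simp [Complex.polarCoord_symm_apply, circleMap, Complex.exp_mul_I]

theorem Complex.polarCoord_symm_mem_ball_zero_iff {p : ℝ × ℝ} {t : ℝ}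
    (hp : p ∈ polarCoord.target) :
    Complex.polarCoord.symm p ∈ ball 0 t ↔ p ∈ Ioo 0 t ×ˢ Ioo (-π) π := by
  rw [polarCoord_target] at hp
  have hr : 0 < p.1 := hp.1
  simp [abs_of_pos hr, hr, mem_prod.mp hp]

theorem setIntegral_Ioo_neg_pi_pi_comp_circleMap (g : ℂ → ℝ) (c : ℂ) (r : ℝ) :
    ∫ θ in Ioo (-π) π, g (circleMap c r θ) = 2 * π * circleAverage g c r := by
  rw [circleAverage_eq_integral_add (-π), smul_eq_mul, ← mul_assoc,
    mul_inv_cancel₀ (by positivity), one_mul,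
    intervalIntegral.integral_comp_add_right (fun θ => g (circleMap c r θ)),
    intervalIntegral.integral_of_le (by linarith [pi_pos]), integral_Ioc_eq_integral_Ioo,
    zero_add, show 2 * π + -π = π by ring]

theorem setIntegral_ball_eq_integral_circleAverage {g : ℂ → ℝ} {c : ℂ} {t : ℝ}
    (hg : ContinuousOn g (closedBall c t)) :
    ∫ w in ball c t, g w = ∫ r in Ioo 0 t, 2 * π * r * circleAverage g c r := by
  set S : Set (ℝ × ℝ) := Ioo 0 t ×ˢ Ioo (-π) π
  set F : ℝ × ℝ → ℝ := fun p => p.1 * g (circleMap c p.1 p.2)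
  have hF : IntegrableOn F S (volume.prod volume) := by
    rw [← Measure.volume_eq_prod]
    refine (ContinuousOn.integrableOn_compact (isCompact_Icc.prod isCompact_Icc) ?_).mono_set
      (prod_mono Ioo_subset_Icc_self Ioo_subset_Icc_self)
    refine continuous_fst.continuousOn.mul (hg.comp (by fun_prop) fun p hp => ?_)
    exact closedBall_subset_closedBall hp.1.2 (circleMap_mem_closedBall c hp.1.1 p.2)
  calc ∫ w in ball c t, g w = ∫ w in ball 0 t, g (c + w) := by
        rw [← (measurePreserving_add_left volume c).setIntegral_preimage_emb
          (measurableEmbedding_addLeft c)]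
        simp [preimage_add_ball]
    _ = ∫ p in polarCoord.target, S.indicator F p := by
        rw [← integral_indicator measurableSet_ball, ← Complex.integral_comp_polarCoord_symm]
        refine setIntegral_congr_fun polarCoord.open_target.measurableSet fun p hp => ?_
        by_cases hpS : p ∈ S
        · rw [indicator_of_mem ((Complex.polarCoord_symm_mem_ball_zero_iff hp).mpr hpS),
            indicator_of_mem hpS, Complex.polarCoord_symm_eq_circleMap]
          simp only [F, smul_eq_mul, circleMap, zero_add]
        · rw [indicator_of_notMem (mt (Complex.polarCoord_symm_mem_ball_zero_iff hp).mp hpS),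
            indicator_of_notMem hpS, smul_zero]
    _ = ∫ p in S, F p := by
        have hS : S ⊆ polarCoord.target := by
          rw [polarCoord_target]; exact prod_mono Ioo_subset_Ioi_self le_rfl
        rw [setIntegral_indicator (measurableSet_Ioo.prod measurableSet_Ioo),
          inter_eq_right.mpr hS]
    _ = ∫ r in Ioo 0 t, 2 * π * r * circleAverage g c r := by
        rw [Measure.volume_eq_prod, setIntegral_prod F hF]
        refine setIntegral_congr_fun measurableSet_Ioo fun r _ => ?_
        simp only [F, integral_const_mul, setIntegral_Ioo_neg_pi_pi_comp_circleMap]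
        ring

theorem mul_le_setIntegral_ball_of_le_circleAverage {g : ℂ → ℝ} {c : ℂ} {t : ℝ} (ht : 0 ≤ t)
    (hg : ContinuousOn g (closedBall c t)) (hmean : ∀ r ∈ Ioo 0 t, g c ≤ circleAverage g c r) :
    π * t ^ 2 * g c ≤ ∫ w in ball c t, g w := by
  have hg' : ContinuousOn g {z | ‖z - c‖ ∈ Icc 0 t} := by
    simpa [closedBall, dist_eq_norm] using hg
  have hint : IntegrableOn (fun r => 2 * π * r * circleAverage g c r) (Ioo 0 t) :=
    ((continuousOn_const.mul continuousOn_id).mul (hg'.circleAverage fun r hr => hr.1)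
      |>.integrableOn_compact isCompact_Icc).mono_set Ioo_subset_Icc_self
  have hlow : IntegrableOn (fun r => 2 * π * r * g c) (Ioo 0 t) :=
    (Continuous.integrableOn_Icc (by fun_prop)).mono_set Ioo_subset_Icc_self
  calc π * t ^ 2 * g c = ∫ r in Ioo 0 t, 2 * π * r * g c := by
        rw [integral_mul_const, integral_const_mul, ← integral_Ioc_eq_integral_Ioo,
          ← intervalIntegral.integral_of_le ht, integral_id]
        ring
    _ ≤ ∫ r in Ioo 0 t, 2 * π * r * circleAverage g c r :=
        setIntegral_mono_on hlow hint measurableSet_Ioo fun r hr =>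
          mul_le_mul_of_nonneg_left (hmean r hr) (by have := hr.1; positivity)
    _ = ∫ w in ball c t, g w := (setIntegral_ball_eq_integral_circleAverage hg).symm

theorem Fin.cons_mem_ball_iff {X : Type*} [PseudoMetricSpace X] {n : ℕ} {z : Fin (n + 1) → X}
    {t : ℝ} (ht : 0 < t) {a : X} {b : Fin n → X} :
    Fin.cons a b ∈ ball z t ↔ a ∈ ball (z 0) t ∧ b ∈ ball (Fin.tail z) t := by
  simp only [ball_pi _ ht, mem_univ_pi, Fin.forall_fin_succ, Fin.cons_zero, Fin.cons_succ,
    Fin.tail]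

theorem Fin.cons_mem_closedBall_iff {X : Type*} [PseudoMetricSpace X] {n : ℕ}
    {z : Fin (n + 1) → X} {t : ℝ} (ht : 0 ≤ t) {a : X} {b : Fin n → X} :
    Fin.cons a b ∈ closedBall z t ↔ a ∈ closedBall (z 0) t ∧ b ∈ closedBall (Fin.tail z) t := by
  simp only [closedBall_pi _ ht, mem_univ_pi, Fin.forall_fin_succ, Fin.cons_zero, Fin.cons_succ,
    Fin.tail]

theorem setIntegral_ball_fin_succ {X : Type*} [MeasureSpace X] [SigmaFinite (volume : Measure X)]
    [PseudoMetricSpace X] {n : ℕ} (g : (Fin (n + 1) → X) → ℝ) {z : Fin (n + 1) → X} {t : ℝ}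
    (ht : 0 < t) :
    ∫ w in ball z t, g w = ∫ q in ball (z 0) t ×ˢ ball (Fin.tail z) t, g (Fin.cons q.1 q.2) := by
  set e := (MeasurableEquiv.piFinSuccAbove (fun _ : Fin (n + 1) => X) 0).symm
  have he_apply : ∀ q, e q = Fin.cons q.1 q.2 := fun q => by
    simp [e, MeasurableEquiv.piFinSuccAbove_symm_apply, Fin.insertNthEquiv, Fin.insertNth_zero']
  have hpre : e ⁻¹' ball z t = ball (z 0) t ×ˢ ball (Fin.tail z) t := by
    ext q
    rw [mem_preimage, he_apply, Fin.cons_mem_ball_iff ht, mem_prod]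
  have he := (volume_preserving_piFinSuccAbove (fun _ : Fin (n + 1) => X) 0).symm
  rw [← he.setIntegral_preimage_emb e.measurableEmbedding, hpre]
  congr with q
  exact congrArg g (he_apply q)

section MeanValue

variable {E : Type*} [NormedAddCommGroup E] [NormedSpace ℂ E] [CompleteSpace E]

theorem norm_le_circleAverage_norm {f : ℂ → E} {c : ℂ} {R : ℝ}
    (hf : DiffContOnCl ℂ f (ball c |R|)) :
    ‖f c‖ ≤ circleAverage (‖f ·‖) c R := by
  rw [← hf.circleAverage, circleAverage_def, circleAverage_def, norm_smul, smul_eq_mul,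
    norm_inv, Real.norm_of_nonneg (by positivity)]
  gcongr
  exact intervalIntegral.norm_integral_le_integral_norm (by positivity)

theorem pi_mul_sq_mul_norm_le_setIntegral_norm_ball {f : ℂ → E} {c : ℂ} {t : ℝ} (ht : 0 ≤ t)
    (hf : DifferentiableOn ℂ f (closedBall c t)) :
    π * t ^ 2 * ‖f c‖ ≤ ∫ w in ball c t, ‖f w‖ :=
  mul_le_setIntegral_ball_of_le_circleAverage ht hf.continuousOn.norm fun r hr =>
    norm_le_circleAverage_norm <| hf.diffContOnCl_ball <| by
      rw [abs_of_pos hr.1]; exact closedBall_subset_closedBall hr.2.le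

theorem pi_pow_mul_pow_mul_norm_le_setIntegral_norm_ball {n : ℕ} {f : (Fin n → ℂ) → E}
    {z : Fin n → ℂ} {t : ℝ} (ht : 0 < t) (hf : DifferentiableOn ℂ f (closedBall z t)) :
    π ^ n * t ^ (2 * n) * ‖f z‖ ≤ ∫ w in ball z t, ‖f w‖ := by
  induction n with
  | zero =>
    have hball : ball z t = univ := eq_univ_of_forall fun w => by simpa [Subsingleton.elim w z]
    have hvol : (volume : Measure (Fin 0 → ℂ)) univ = 1 := by simp [volume_pi]
    simp [hball, Subsingleton.elim _ z, measureReal_def, hvol]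
  | succ n ih =>
    set Z := Fin.tail z
    have hcons : ∀ a ∈ closedBall (z 0) t, ∀ b ∈ closedBall Z t,
        (Fin.cons a b : Fin (n + 1) → ℂ) ∈ closedBall z t := fun a ha b hb =>
      (Fin.cons_mem_closedBall_iff ht.le).mpr ⟨ha, hb⟩
    have hcont : ContinuousOn (fun q : ℂ × (Fin n → ℂ) => ‖f (Fin.cons q.1 q.2)‖)
        (closedBall (z 0) t ×ˢ closedBall Z t) :=
      (hf.continuousOn.comp (by fun_prop) fun q hq => hcons _ hq.1 _ hq.2).norm
    have hint : IntegrableOn (fun q : ℂ × (Fin n → ℂ) => ‖f (Fin.cons q.1 q.2)‖)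
        (ball (z 0) t ×ˢ ball Z t) (volume.prod volume) :=
      (hcont.integrableOn_compact ((isCompact_closedBall _ _).prod (isCompact_closedBall _ _))
        ).mono_set (prod_mono ball_subset_closedBall ball_subset_closedBall)
    have hinner : ∀ a ∈ ball (z 0) t,
        π ^ n * t ^ (2 * n) * ‖f (Fin.cons a Z)‖ ≤ ∫ b in ball Z t, ‖f (Fin.cons a b)‖ :=
      fun a ha => ih (hf.comp (by fun_prop) fun b hb => hcons a (ball_subset_closedBall ha) b hb)
    have hdisc : π * t ^ 2 * ‖f (Fin.cons (z 0) Z)‖ ≤ ∫ a in ball (z 0) t, ‖f (Fin.cons a Z)‖ :=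
      pi_mul_sq_mul_norm_le_setIntegral_norm_ball ht.le
        (hf.comp (by fun_prop) fun a ha => hcons a ha Z (mem_closedBall_self ht.le))
    rw [Fin.cons_self_tail] at hdisc
    calc π ^ (n + 1) * t ^ (2 * (n + 1)) * ‖f z‖
        = π ^ n * t ^ (2 * n) * (π * t ^ 2 * ‖f z‖) := by ring
      _ ≤ ∫ a in ball (z 0) t, π ^ n * t ^ (2 * n) * ‖f (Fin.cons a Z)‖ := by
        rw [integral_const_mul]; gcongr
      _ ≤ ∫ a in ball (z 0) t, ∫ b in ball Z t, ‖f (Fin.cons a b)‖ :=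
        integral_mono_of_nonneg (.of_forall fun _ => by positivity)
          (by rw [IntegrableOn, ← Measure.prod_restrict] at hint; exact hint.integral_prod_left)
          ((ae_restrict_iff' measurableSet_ball).mpr (.of_forall hinner))
      _ = ∫ w in ball z t, ‖f w‖ := by
        rw [setIntegral_ball_fin_succ _ ht, Measure.volume_eq_prod, setIntegral_prod _ hint]

theorem pi_pow_mul_pow_mul_norm_rpow_le_of_norm_le {n : ℕ} {p : ℝ} (hp0 : 0 < p) (hp1 : p ≤ 1)
    {ψ : (Fin n → ℂ) → E} {z : Fin n → ℂ} {t c : ℝ} (ht : 0 < t) (hc : 0 ≤ c)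
    (hψ : DifferentiableOn ℂ ψ (closedBall z t)) (hbound : ∀ w ∈ ball z t, ‖ψ w‖ ≤ c * ‖ψ z‖) :
    π ^ n * t ^ (2 * n) * ‖ψ z‖ ^ p ≤ c ^ (1 - p) * ∫ w in ball z t, ‖ψ w‖ ^ p := by
  rcases (norm_nonneg (ψ z)).eq_or_lt with h0 | hx
  · rw [← h0, zero_rpow hp0.ne', mul_zero]
    exact mul_nonneg (by positivity) (integral_nonneg fun _ => by positivity)
  set x := ‖ψ z‖
  have hint : IntegrableOn (fun w => (c * x) ^ (1 - p) * ‖ψ w‖ ^ p) (ball z t) :=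
    (((hψ.continuousOn.norm.rpow_const fun _ _ => Or.inr hp0.le).integrableOn_compact
      (isCompact_closedBall z t)).mono_set ball_subset_closedBall).const_mul _
  have hpoint : ∀ w ∈ ball z t, ‖ψ w‖ ≤ (c * x) ^ (1 - p) * ‖ψ w‖ ^ p := fun w hw => by
    calc ‖ψ w‖ = ‖ψ w‖ ^ (1 - p) * ‖ψ w‖ ^ p := by
          rw [← rpow_add' (norm_nonneg _) (by norm_num), sub_add_cancel, rpow_one]
      _ ≤ (c * x) ^ (1 - p) * ‖ψ w‖ ^ p := by
          gcongr
          exact hbound w hw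
  have hmean : π ^ n * t ^ (2 * n) * x ≤ (c * x) ^ (1 - p) * ∫ w in ball z t, ‖ψ w‖ ^ p := by
    calc π ^ n * t ^ (2 * n) * x ≤ ∫ w in ball z t, ‖ψ w‖ :=
          pi_pow_mul_pow_mul_norm_le_setIntegral_norm_ball ht hψ
      _ ≤ ∫ w in ball z t, (c * x) ^ (1 - p) * ‖ψ w‖ ^ p :=
          integral_mono_of_nonneg (.of_forall fun _ => norm_nonneg _) hint
            ((ae_restrict_iff' measurableSet_ball).mpr (.of_forall hpoint))
      _ = (c * x) ^ (1 - p) * ∫ w in ball z t, ‖ψ w‖ ^ p := integral_const_mul _ _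
  have hx' : 0 < x ^ (1 - p) := rpow_pos_of_pos hx _
  rw [mul_rpow hc hx.le] at hmean
  refine le_of_mul_le_mul_right ?_ hx'
  calc π ^ n * t ^ (2 * n) * x ^ p * x ^ (1 - p) = π ^ n * t ^ (2 * n) * x := by
        rw [mul_assoc, ← rpow_add hx, add_sub_cancel, rpow_one]
    _ ≤ _ := hmean
    _ = _ := by ring

theorem pi_pow_mul_weight_mul_norm_rpow_le_of_isMaxOn {n : ℕ} {p : ℝ} (hp0 : 0 < p)
    (hp1 : p ≤ 1) {ψ : (Fin n → ℂ) → E} {z₀ z₁ : Fin n → ℂ} {R : ℝ}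
    (hψ : DifferentiableOn ℂ ψ (closedBall z₀ R))
    (hmax : IsMaxOn (fun w => (R - dist w z₀) ^ (2 * n) * ‖ψ w‖ ^ p) (closedBall z₀ R) z₁)
    (hz₁ : dist z₁ z₀ < R) :
    π ^ n * ((R - dist z₁ z₀) ^ (2 * n) * ‖ψ z₁‖ ^ p) ≤
      4 ^ (n / p) * ∫ w in closedBall z₀ R, ‖ψ w‖ ^ p := by
  set t := (R - dist z₁ z₀) / 2
  have ht : 0 < t := by simp only [t]; linarith
  have hρt : R - dist z₁ z₀ = 2 * t := by simp only [t]; ring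
  have hball : closedBall z₁ t ⊆ closedBall z₀ R := fun w hw => by
    have := dist_triangle w z₁ z₀
    simp only [t, mem_closedBall] at hw ⊢
    linarith
  have hρ_ball : ∀ w ∈ ball z₁ t, t ≤ R - dist w z₀ := fun w hw => by
    have := dist_triangle w z₁ z₀
    simp only [t, mem_ball] at hw
    linarith
  set c : ℝ := 4 ^ (n / p)
  have hcp : c ^ p = 4 ^ n := by
    rw [← rpow_mul (by norm_num), div_mul_cancel₀ _ hp0.ne', rpow_natCast]
  have hbound : ∀ w ∈ ball z₁ t, ‖ψ w‖ ≤ c * ‖ψ z₁‖ := fun w hw => by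
    have key : t ^ (2 * n) * ‖ψ w‖ ^ p ≤ t ^ (2 * n) * (c * ‖ψ z₁‖) ^ p := by
      calc t ^ (2 * n) * ‖ψ w‖ ^ p ≤ (R - dist w z₀) ^ (2 * n) * ‖ψ w‖ ^ p := by
            have := hρ_ball w hw; gcongr
        _ ≤ (R - dist z₁ z₀) ^ (2 * n) * ‖ψ z₁‖ ^ p :=
            hmax (hball (ball_subset_closedBall hw))
        _ = t ^ (2 * n) * (c * ‖ψ z₁‖) ^ p := by
            rw [mul_rpow (by positivity) (norm_nonneg _), hcp, hρt, mul_pow, pow_mul]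
            norm_num
            ring
    exact (rpow_le_rpow_iff (norm_nonneg _) (by positivity) hp0).mp
      (le_of_mul_le_mul_left key (by positivity))
  have hIball : ∫ w in ball z₁ t, ‖ψ w‖ ^ p ≤ ∫ w in closedBall z₀ R, ‖ψ w‖ ^ p :=
    setIntegral_mono_set ((hψ.continuousOn.norm.rpow_const fun _ _ => Or.inr hp0.le
      ).integrableOn_compact (isCompact_closedBall _ _))
      (.of_forall fun _ => by positivity) (ball_subset_closedBall.trans hball).eventuallyLE
  calc π ^ n * ((R - dist z₁ z₀) ^ (2 * n) * ‖ψ z₁‖ ^ p)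
        = 4 ^ n * (π ^ n * t ^ (2 * n) * ‖ψ z₁‖ ^ p) := by
        rw [hρt, mul_pow, pow_mul]
        norm_num
        ring
    _ ≤ 4 ^ n * (c ^ (1 - p) * ∫ w in closedBall z₀ R, ‖ψ w‖ ^ p) := by
        refine mul_le_mul_of_nonneg_left ?_ (by positivity)
        exact (pi_pow_mul_pow_mul_norm_rpow_le_of_norm_le hp0 hp1 ht (by positivity)
          (hψ.mono hball) hbound).trans (by gcongr)
    _ = c * ∫ w in closedBall z₀ R, ‖ψ w‖ ^ p := by
        rw [← mul_assoc, ← hcp, ← rpow_add (by positivity), add_sub_cancel, rpow_one]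

theorem pi_pow_mul_pow_mul_norm_rpow_le_of_le_one {n : ℕ} {p : ℝ} (hp0 : 0 < p) (hp1 : p ≤ 1)
    {ψ : (Fin n → ℂ) → E} {z₀ : Fin n → ℂ} {δ : ℝ} (hδ : 0 < δ)
    (hψ : DifferentiableOn ℂ ψ (closedBall z₀ (2 * δ))) {z : Fin n → ℂ}
    (hz : z ∈ closedBall z₀ δ) :
    π ^ n * δ ^ (2 * n) * ‖ψ z‖ ^ p ≤ 4 ^ (n / p) * ∫ w in closedBall z₀ (2 * δ), ‖ψ w‖ ^ p := by
  set h : (Fin n → ℂ) → ℝ := fun w => (2 * δ - dist w z₀) ^ (2 * n) * ‖ψ w‖ ^ p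
  have hcont : ContinuousOn h (closedBall z₀ (2 * δ)) :=
    ((by fun_prop : Continuous fun w => 2 * δ - dist w z₀).continuousOn.pow _).mul
      (hψ.continuousOn.norm.rpow_const fun _ _ => Or.inr hp0.le)
  obtain ⟨z₁, hz₁K, hmax⟩ := (isCompact_closedBall z₀ (2 * δ)).exists_isMaxOn
    ⟨z₀, mem_closedBall_self (by positivity)⟩ hcont
  have hz_le : δ ^ (2 * n) * ‖ψ z‖ ^ p ≤ h z₁ := by
    refine le_trans ?_ (hmax (closedBall_subset_closedBall (by linarith) hz))
    have : δ ≤ 2 * δ - dist z z₀ := by linarith [mem_closedBall.mp hz]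
    simp only [h]
    gcongr
  calc π ^ n * δ ^ (2 * n) * ‖ψ z‖ ^ p ≤ π ^ n * h z₁ := by
        rw [mul_assoc]; gcongr
    _ ≤ _ := by
      rcases le_or_gt (h z₁) 0 with hM | hM
      · exact (mul_nonpos_of_nonneg_of_nonpos (by positivity) hM).trans (by positivity)
      refine pi_pow_mul_weight_mul_norm_rpow_le_of_isMaxOn hp0 hp1 hψ hmax ?_
      rcases Nat.eq_zero_or_pos n with rfl | hn
      · simp [Subsingleton.elim z₁ z₀, hδ]
      · refine (mem_closedBall.mp hz₁K).lt_of_ne fun h0 => hM.ne' ?_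
        simp [h, h0, hn.ne']

theorem pi_pow_mul_pow_mul_norm_le_of_one_le {n : ℕ} {p : ℝ} (hp : 1 ≤ p)
    {ψ : (Fin n → ℂ) → E} {z₀ : Fin n → ℂ} {δ : ℝ} (hδ : 0 < δ)
    (hψ : DifferentiableOn ℂ ψ (closedBall z₀ (2 * δ))) {z : Fin n → ℂ}
    (hz : z ∈ closedBall z₀ δ) :
    π ^ n * δ ^ (2 * n) * ‖ψ z‖ ≤
      volume.real (closedBall z₀ (2 * δ)) + ∫ w in closedBall z₀ (2 * δ), ‖ψ w‖ ^ p := by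
  set K := closedBall z₀ (2 * δ)
  have hsub : closedBall z δ ⊆ K := fun w hw => by
    have := dist_triangle w z z₀
    simp only [K, mem_closedBall] at hw hz ⊢
    linarith
  have hψp : IntegrableOn (fun w => ‖ψ w‖ ^ p) K :=
    (hψ.continuousOn.norm.rpow_const fun _ _ => Or.inr (by linarith)).integrableOn_compact
      (isCompact_closedBall _ _)
  have hone : IntegrableOn (fun _ => (1 : ℝ)) K :=
    integrableOn_const (isCompact_closedBall _ _).measure_lt_top.ne
  have hpoint : ∀ w, ‖ψ w‖ ≤ 1 + ‖ψ w‖ ^ p := fun w => by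
    rcases le_or_gt ‖ψ w‖ 1 with h | h
    · linarith [rpow_nonneg (norm_nonneg (ψ w)) p]
    · linarith [self_le_rpow_of_one_le h.le hp]
  calc π ^ n * δ ^ (2 * n) * ‖ψ z‖ ≤ ∫ w in ball z δ, ‖ψ w‖ :=
        pi_pow_mul_pow_mul_norm_le_setIntegral_norm_ball hδ (hψ.mono hsub)
    _ ≤ ∫ w in ball z δ, (1 + ‖ψ w‖ ^ p) :=
        integral_mono_of_nonneg (.of_forall fun _ => norm_nonneg _)
          ((hone.add hψp).mono_set (ball_subset_closedBall.trans hsub)) (.of_forall hpoint)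
    _ ≤ ∫ w in K, (1 + ‖ψ w‖ ^ p) :=
        setIntegral_mono_set (hone.add hψp) (.of_forall fun _ => by positivity)
          (ball_subset_closedBall.trans hsub).eventuallyLE
    _ = volume.real K + ∫ w in K, ‖ψ w‖ ^ p := by
        rw [integral_add hone hψp, setIntegral_const, smul_eq_mul, mul_one]

theorem exists_norm_le_of_setIntegral_rpow_le_one {n : ℕ} {p : ℝ} (hp : 0 < p)
    (z₀ : Fin n → ℂ) {δ : ℝ} (hδ : 0 < δ) :
    ∃ C, ∀ ψ : (Fin n → ℂ) → E, DifferentiableOn ℂ ψ (closedBall z₀ (2 * δ)) →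
      ∫ w in closedBall z₀ (2 * δ), ‖ψ w‖ ^ p ≤ 1 → ∀ z ∈ closedBall z₀ δ, ‖ψ z‖ ≤ C := by
  have hV : 0 < π ^ n * δ ^ (2 * n) := by positivity
  rcases le_total p 1 with hp1 | hp1
  · refine ⟨(4 ^ (n / p) / (π ^ n * δ ^ (2 * n))) ^ p⁻¹, fun ψ hψ hI z hz => ?_⟩
    rw [le_rpow_inv_iff_of_pos (norm_nonneg _) (by positivity) hp, le_div_iff₀' hV]
    calc π ^ n * δ ^ (2 * n) * ‖ψ z‖ ^ p
        ≤ 4 ^ (n / p) * ∫ w in closedBall z₀ (2 * δ), ‖ψ w‖ ^ p :=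
          pi_pow_mul_pow_mul_norm_rpow_le_of_le_one hp hp1 hδ hψ hz
      _ ≤ 4 ^ (n / p) := mul_le_of_le_one_right (by positivity) hI
  · refine ⟨(volume.real (closedBall z₀ (2 * δ)) + 1) / (π ^ n * δ ^ (2 * n)),
      fun ψ hψ hI z hz => ?_⟩
    rw [le_div_iff₀' hV]
    exact (pi_pow_mul_pow_mul_norm_le_of_one_le hp1 hδ hψ hz).trans (by gcongr)

end MeanValue

section Bergman

variable {n : ℕ} {p : ℝ} {D D' : Set (Fin n → ℂ)} {φ : (Fin n → ℂ) → ℂ}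

theorem apNorm_nonneg : 0 ≤ apNorm n p D φ :=
  rpow_nonneg (integral_nonneg fun _ => by positivity) _

theorem apNorm_rpow (hp : 0 < p) : apNorm n p D φ ^ p = ∫ z in D, ‖φ z‖ ^ p := by
  rw [apNorm, ← rpow_mul (integral_nonneg fun _ => by positivity), one_div_mul_cancel hp.ne',
    rpow_one]

theorem apNorm_congr (hD : MeasurableSet D) {ψ : (Fin n → ℂ) → ℂ} (h : EqOn φ ψ D) :
    apNorm n p D φ = apNorm n p D ψ := by
  rw [apNorm, apNorm, setIntegral_congr_fun hD fun z hz => by rw [h hz]]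

theorem MemAp.div_const (hφ : MemAp n p D φ) (c : ℂ) : MemAp n p D (fun z => φ z / c) := by
  refine ⟨by simpa only [div_eq_mul_inv] using hφ.1.mul_const c⁻¹, ?_⟩
  simp_rw [norm_div, div_rpow (norm_nonneg _) (norm_nonneg c)]
  exact hφ.2.div_const _

theorem setIntegral_norm_div_apNorm_rpow (hp : 0 < p) (hφ : apNorm n p D φ ≠ 0) :
    ∫ z in D, ‖φ z / apNorm n p D φ‖ ^ p = 1 := by
  simp_rw [norm_div, Complex.norm_real, Real.norm_of_nonneg apNorm_nonneg,
    div_rpow (norm_nonneg _) apNorm_nonneg, integral_div, apNorm_rpow hp]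
  rw [← apNorm_rpow hp]
  exact div_self (rpow_pos_of_pos (apNorm_nonneg.lt_of_ne' hφ) p).ne'

theorem pBergman_le_sq_of_restrictionIsometry (hp : 0 < p) (hD : MeasurableSet D)
    (hiso : RestrictionIsometry n p D D') {z : Fin n → ℂ} (hz : z ∈ D) {C : ℝ}
    (hbound : ∀ ψ, MemAp n p D' ψ → ∫ w in D', ‖ψ w‖ ^ p = 1 → ‖ψ z‖ ≤ C) :
    pBergman n p D z ≤ C ^ 2 := by
  refine Real.sSup_le ?_ (sq_nonneg C)
  rintro _ ⟨φ, hφ, -, rfl⟩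
  obtain ⟨ψ, hψ, hψφ⟩ := hiso.2 φ hφ
  have hN : apNorm n p D φ = apNorm n p D' ψ :=
    (apNorm_congr hD fun w hw => (hψφ w hw).symm).trans (hiso.1 ψ hψ).2
  rw [hN, ← hψφ z hz]
  rcases eq_or_ne (apNorm n p D' ψ) 0 with h0 | h0
  -- division by zero: this `φ` contributes `‖φ z‖ ^ 2 / 0 = 0`
  · simpa [h0] using sq_nonneg C
  have h1 := hbound _ (hψ.div_const _) (setIntegral_norm_div_apNorm_rpow hp h0)
  rw [norm_div, Complex.norm_real, Real.norm_of_nonneg apNorm_nonneg] at h1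
  rw [← div_pow]
  exact pow_le_pow_left₀ (div_nonneg (norm_nonneg _) apNorm_nonneg) h1 2

end Bergman

theorem IsPreconnected.exists_mem_closure_notMem {X : Type*} [TopologicalSpace X] {D D' : Set X}
    (hD' : IsPreconnected D') (hD : IsOpen D) (hne : D.Nonempty) (hDD' : D ⊂ D') :
    ∃ z ∈ closure D ∩ D', z ∉ D := by
  by_contra! h
  obtain ⟨x, hx⟩ := hne
  exact hDD'.not_subset (hD'.subset_of_closure_inter_subset hD ⟨x, hDD'.subset hx, hx⟩ h)

theorem apComplete_of_exhaustive_pBergman_general (n : ℕ) (D : Set (Fin n → ℂ))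
    (hD : IsOpen D) (hDc : IsConnected D)
    (p : ℝ) (hp : 0 < p)
    (hexh : ∀ c : ℝ, IsCompact {z ∈ D | pBergman n p D z ≤ c}) :
    ApComplete n p D := by
  rintro ⟨D', hD'o, hD'c, hDD', hne, hiso⟩
  obtain ⟨z₀, ⟨hz₀D, hz₀D'⟩, hz₀⟩ :=
    hD'c.isPreconnected.exists_mem_closure_notMem hD hDc.nonempty (hDD'.ssubset_of_ne hne)
  obtain ⟨δ, hδ, hK⟩ : ∃ δ > 0, closedBall z₀ (2 * δ) ⊆ D' := by
    obtain ⟨ε, hε, hεD'⟩ := nhds_basis_closedBall.mem_iff.mp (hD'o.mem_nhds hz₀D')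
    exact ⟨ε / 2, by positivity, by rwa [mul_div_cancel₀ _ two_ne_zero]⟩
  obtain ⟨C, hC⟩ := exists_norm_le_of_setIntegral_rpow_le_one (E := ℂ) hp z₀ hδ
  have hbound : ∀ z ∈ ball z₀ δ, ∀ ψ, MemAp n p D' ψ → ∫ w in D', ‖ψ w‖ ^ p = 1 → ‖ψ z‖ ≤ C :=
    fun z hz ψ hψ h1 => hC ψ (hψ.1.mono hK) (h1 ▸ setIntegral_mono_set hψ.2
      (.of_forall fun _ => by positivity) hK.eventuallyLE) z (ball_subset_closedBall hz)
  have hsub : D ∩ ball z₀ δ ⊆ {z ∈ D | pBergman n p D z ≤ C ^ 2} := fun z hz =>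
    ⟨hz.1, pBergman_le_sq_of_restrictionIsometry hp hD.measurableSet hiso hz.1 (hbound z hz.2)⟩
  have hz₀cl : z₀ ∈ closure (D ∩ ball z₀ δ) :=
    isOpen_ball.closure_inter ⟨hz₀D, mem_ball_self hδ⟩
  exact hz₀ ((hexh _).isClosed.closure_subset_iff.mpr hsub hz₀cl).1

/-- if the `p`-Bergman kernel of a bounded domain `D` is exhaustive,
then `D` is `A^p`-complete. -/
theorem apComplete_of_exhaustive_pBergman (n : ℕ) (D : Set (Fin n → ℂ))
    (hD : IsOpen D) (hDc : IsConnected D) (hDb : Bornology.IsBounded D)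
    (p : ℝ) (hp : 0 < p)
    (hexh : ∀ c : ℝ, IsCompact {z ∈ D | pBergman n p D z ≤ c}) :
    ApComplete n p D :=
  apComplete_of_exhaustive_pBergman_general n D hD hDc p hp hexh
end

section
/- Let D be a bounded domain in ℂⁿ such that the interior of its closure equals D itself. Then D is A^p-complete for every p > 0. -/
/-!
Suppose `D ⊊ D'` with the restriction `A^p(D') → A^p(D)` an isometry onto. The constant `1` lies in
`A^p(D)` since `D` is bounded; its extension to `D'` is again `1` by the identity theorem, so the
isometry gives `vol D = vol D'`. Hence `D' \ D` is null, the open set `D'` lies in `cl D`, and so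
`D' ⊆ int (cl D) = D`.
-/

open MeasureTheory

open Set Filter Topology

section IdentityTheorem

variable {E F : Type*} [NormedAddCommGroup E] [NormedSpace ℂ E]
  [NormedAddCommGroup F] [NormedSpace ℂ F] [CompleteSpace F] {f g : E → F} {U : Set E} {z₀ : E}

/-- Restricted to the complex line through `z₀` and `y`, `f` is a holomorphic function of one
variable on a convex open set, where the one-variable identity theorem applies. -/
theorem DifferentiableOn.eqOn_zero_of_convex (hf : DifferentiableOn ℂ f U) (hU : IsOpen U)
    (hUc : Convex ℝ U) (hz₀ : z₀ ∈ U) (hfz₀ : f =ᶠ[𝓝 z₀] 0) : EqOn f 0 U := by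
  intro y hy
  set L : ℂ → E := fun t => z₀ + t • (y - z₀)
  have hL : Differentiable ℂ L := (differentiable_id.smul_const _).const_add _
  have hLin : IsLinearMap ℝ fun t : ℂ => t • (y - z₀) :=
    ((LinearMap.toSpanSingleton ℂ E (y - z₀)).restrictScalars ℝ).isLinear
  have hS : Convex ℝ (L ⁻¹' U) := (hUc.translate_preimage_right z₀).is_linear_preimage hLin
  have h0 : (0 : ℂ) ∈ L ⁻¹' U := by simpa [L] using hz₀
  have h1 : (1 : ℂ) ∈ L ⁻¹' U := by simpa [L] using hy
  have hfL : (f ∘ L) =ᶠ[𝓝 0] 0 := by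
    have hL0 : Tendsto L (𝓝 0) (𝓝 z₀) := by simpa [L] using hL.continuous.tendsto (0 : ℂ)
    exact hL0.eventually hfz₀
  have hanalytic : AnalyticOnNhd ℂ (f ∘ L) (L ⁻¹' U) :=
    (hf.comp hL.differentiableOn (mapsTo_preimage L U)).analyticOnNhd (hU.preimage hL.continuous)
  simpa [L] using hanalytic.eqOn_zero_of_preconnected_of_eventuallyEq_zero hS.isPreconnected h0
    hfL h1

theorem DifferentiableOn.eqOn_zero_of_isPreconnected (hf : DifferentiableOn ℂ f U)
    (hU : IsOpen U) (hUc : IsPreconnected U) (hz₀ : z₀ ∈ U) (hfz₀ : f =ᶠ[𝓝 z₀] 0) :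
    EqOn f 0 U := by
  set A : Set E := {z | f =ᶠ[𝓝 z] 0}
  suffices U ⊆ A from fun z hz => (this hz).self_of_nhds
  refine hUc.subset_of_closure_inter_subset isOpen_setOfPred_eventually_nhds ⟨z₀, hz₀, hfz₀⟩ ?_
  rintro z ⟨hzA, hzU⟩
  obtain ⟨r, hr, hball⟩ := Metric.isOpen_iff.1 hU z hzU
  obtain ⟨w, hwA, hzw⟩ := Metric.mem_closure_iff.1 hzA r hr
  have hw : w ∈ Metric.ball z r := by rwa [Metric.mem_ball, dist_comm]
  have hzero := (hf.mono hball).eqOn_zero_of_convex Metric.isOpen_ball (convex_ball z r) hw hwA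
  exact eventually_of_mem (Metric.isOpen_ball.mem_nhds (Metric.mem_ball_self hr)) hzero

theorem DifferentiableOn.eqOn_of_isPreconnected (hf : DifferentiableOn ℂ f U)
    (hg : DifferentiableOn ℂ g U) (hU : IsOpen U) (hUc : IsPreconnected U) (hz₀ : z₀ ∈ U)
    (hfg : f =ᶠ[𝓝 z₀] g) : EqOn f g U := fun _ hz =>
  sub_eq_zero.1 <| (hf.sub hg).eqOn_zero_of_isPreconnected hU hUc hz₀
    (hfg.mono fun _ h => sub_eq_zero.2 h) hz

end IdentityTheorem

theorem IsOpen.subset_closure_of_measure_sdiff_eq_zero {X : Type*} [TopologicalSpace X]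
    [MeasurableSpace X] {μ : Measure X} [μ.IsOpenPosMeasure] {U s : Set X} (hU : IsOpen U)
    (h : μ (U \ s) = 0) : U ⊆ closure s := by
  have hempty : U \ closure s = ∅ :=
    ((hU.sdiff isClosed_closure).measure_eq_zero_iff μ).1 <|
      measure_mono_null (sdiff_subset_sdiff_right subset_closure) h
  exact sdiff_eq_empty.1 hempty

section ConstantOne

variable {n : ℕ} {p : ℝ} {s : Set (Fin n → ℂ)} {ψ : (Fin n → ℂ) → ℂ}

theorem memAp_one (hs : volume s < ⊤) : MemAp n p s 1 := by
  refine ⟨differentiableOn_const 1, ?_⟩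
  simpa using integrableOn_const (C := (1 : ℝ)) hs.ne

theorem apNorm_of_eqOn_one (hs : MeasurableSet s) (hψ : EqOn ψ 1 s) :
    apNorm n p s ψ = volume.real s ^ (1 / p) := by
  rw [apNorm, setIntegral_congr_fun hs (g := fun _ => (1 : ℝ)) fun z hz => by simp [hψ hz],
    setIntegral_const, smul_eq_mul, mul_one]

theorem MemAp.volume_lt_top_of_eqOn_one (h : MemAp n p s ψ) (hs : MeasurableSet s)
    (hψ : EqOn ψ 1 s) : volume s < ⊤ := by
  have hone : IntegrableOn (fun _ => (1 : ℝ)) s volume :=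
    h.2.congr_fun (fun z hz => by simp [hψ hz]) hs
  exact ((integrableOn_const_iff (C := (1 : ℝ))).1 hone).resolve_left (by simp)

end ConstantOne

theorem RestrictionIsometry.volume_eq {n : ℕ} {p : ℝ} {D D' : Set (Fin n → ℂ)}
    (h : RestrictionIsometry n p D D') (hp : p ≠ 0) (hD : IsOpen D) (hDne : D.Nonempty)
    (hDfin : volume D < ⊤) (hD' : IsOpen D') (hD'c : IsPreconnected D') (hsub : D ⊆ D') :
    volume D = volume D' := by
  obtain ⟨ψ, hψ, hψD⟩ := h.2 1 (memAp_one hDfin)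
  obtain ⟨z₀, hz₀⟩ := hDne
  have hψ1 : EqOn ψ 1 D' := hψ.1.eqOn_of_isPreconnected (differentiableOn_const 1) hD' hD'c
    (hsub hz₀) (eventually_of_mem (hD.mem_nhds hz₀) hψD)
  have hD'fin := hψ.volume_lt_top_of_eqOn_one hD'.measurableSet hψ1
  have hnorm := (h.1 ψ hψ).2
  rw [apNorm_of_eqOn_one hD.measurableSet (hψ1.mono hsub),
    apNorm_of_eqOn_one hD'.measurableSet hψ1] at hnorm
  have hreal : volume.real D = volume.real D' :=
    Real.rpow_left_injOn (one_div_ne_zero hp) measureReal_nonneg measureReal_nonneg hnorm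
  exact (ENNReal.toReal_eq_toReal_iff' hDfin.ne hD'fin.ne).1 hreal

/-- a bounded domain `D ⊆ ℂⁿ` with `int(cl(D)) = D` is `A^p`-complete
for every `p > 0`. -/
theorem apComplete_of_interior_closure_eq (n : ℕ) (D : Set (Fin n → ℂ))
    (hD : IsOpen D) (hDc : IsConnected D) (hDb : Bornology.IsBounded D)
    (hreg : interior (closure D) = D) :
    ∀ p : ℝ, 0 < p → ApComplete n p D := by
  rintro p hp ⟨D', hD', hD'c, hsub, hne, hiso⟩
  have hDfin : volume D < ⊤ := hDb.measure_lt_top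
  have hvol := hiso.volume_eq hp.ne' hD hDc.nonempty hDfin hD' hD'c.isPreconnected hsub
  have hnull : volume (D' \ D) = 0 := by
    rw [measure_sdiff hsub hD.nullMeasurableSet hDfin.ne, hvol, tsub_self]
  have hD'D : D' ⊆ D :=
    hreg ▸ interior_maximal (hD'.subset_closure_of_measure_sdiff_eq_zero hnull) hD'
  exact hne (hsub.antisymm hD'D)
end

section
/- Let D ⊂ ℂⁿ be a bounded Runge domain (holomorphically convex and every holomorphic function on D is a locally uniform limit of polynomials). Then D does not have the punctured disc property: there is no proper holomorphic map h : 𝔻* → D, where 𝔻* = {z : 0 < |z| ≤ 1}. -/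
/-!
Let `h : 𝔻* → D` be holomorphic and proper, and `K = h(S¹)`. For a polynomial `P`, the map
`P ∘ h` is bounded near `0` because `D` is bounded, so its singularity is removable and the maximum
principle gives `|P ∘ h| ≤ sup_K |P|` on `𝔻*`: the image `h(𝔻*)` lies in the polynomial hull of
`K`. Since every holomorphic function on `D` is a locally uniform limit of polynomials, this hull
is contained in the holomorphically convex hull of `K`, which is a compact subset of `D`. Its
preimage under `h`, which is all of `𝔻*`, would then be compact, which it is not.
-/

open MeasureTheory

/-- The punctured closed unit disc `𝔻* = {z ∈ ℂ : 0 < |z| ≤ 1}`. -/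
def puncturedDisc : Set ℂ := Metric.closedBall 0 1 \ {0}

/-- `D` has the punctured disc property: there is a proper holomorphic map `𝔻* → D`. -/
def HasPDP (n : ℕ) (D : Set (Fin n → ℂ)) : Prop :=
  ∃ h : ℂ → (Fin n → ℂ),
    DifferentiableOn ℂ h (Metric.ball 0 1 \ {0}) ∧
    ContinuousOn h puncturedDisc ∧
    Set.MapsTo h puncturedDisc D ∧
    ∀ K : Set (Fin n → ℂ), K ⊆ D → IsCompact K →
      IsCompact (puncturedDisc ∩ h ⁻¹' K)

/-- `D` is a Runge domain: holomorphically convex, and every holomorphic function on `D`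
is a uniform limit of polynomials on compact subsets of `D`. -/
def IsRunge (n : ℕ) (D : Set (Fin n → ℂ)) : Prop :=
  (∀ K : Set (Fin n → ℂ), K ⊆ D → IsCompact K →
    IsCompact {z ∈ D | ∀ f : (Fin n → ℂ) → ℂ, DifferentiableOn ℂ f D →
      ‖f z‖ ≤ sSup ((fun w => ‖f w‖) '' K)}) ∧
  (∀ f : (Fin n → ℂ) → ℂ, DifferentiableOn ℂ f D →
    ∀ K : Set (Fin n → ℂ), K ⊆ D → IsCompact K → ∀ ε : ℝ, 0 < ε →
      ∃ P : MvPolynomial (Fin n) ℂ, ∀ z ∈ K, ‖f z - MvPolynomial.eval z P‖ ≤ ε)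

open Metric Set Filter Topology Function Bornology

section RemovableSingularity

variable {E : Type*} [NormedAddCommGroup E] [NormedSpace ℂ E] [CompleteSpace E]
  {g : ℂ → E} {c : ℂ} {r : ℝ}

theorem diffContOnCl_update_limUnder_of_bddAbove (hr : 0 < r)
    (hd : DifferentiableOn ℂ g (ball c r \ {c})) (hc : ContinuousOn g (closedBall c r \ {c}))
    (hb : BddAbove (norm ∘ g '' (ball c r \ {c}))) :
    DiffContOnCl ℂ (update g c (limUnder (𝓝[≠] c) g)) (ball c r) := by
  have hdiff := Complex.differentiableOn_update_limUnder_of_bddAbove (ball_mem_nhds c hr) hd hb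
  refine ⟨hdiff, ?_⟩
  rw [closure_ball c hr.ne']
  intro z hz
  rcases eq_or_ne z c with rfl | hzc
  · exact (hdiff.differentiableAt (ball_mem_nhds z hr)).continuousAt.continuousWithinAt
  · rw [continuousWithinAt_update_of_ne hzc, ← continuousWithinAt_sdiff_singleton (y := c)]
    exact hc z ⟨hz, hzc⟩

theorem norm_le_of_forall_mem_sphere_norm_le_of_bddAbove (hr : 0 < r)
    (hd : DifferentiableOn ℂ g (ball c r \ {c})) (hc : ContinuousOn g (closedBall c r \ {c}))
    (hb : BddAbove (norm ∘ g '' (ball c r \ {c}))) {C : ℝ} (hC : ∀ z ∈ sphere c r, ‖g z‖ ≤ C)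
    {w : ℂ} (hw : w ∈ closedBall c r \ {c}) : ‖g w‖ ≤ C := by
  have hcr : c ∉ sphere c r := by simp [hr.ne]
  have key := Complex.norm_le_of_forall_mem_frontier_norm_le isBounded_ball
    (diffContOnCl_update_limUnder_of_bddAbove hr hd hc hb) (C := C) ?_
    (by rw [closure_ball c hr.ne']; exact hw.1)
  · rwa [update_of_ne hw.2] at key
  · rw [frontier_ball c hr.ne']
    intro z hz
    rw [update_of_ne (ne_of_mem_of_not_mem hz hcr)]
    exact hC z hz

end RemovableSingularity

theorem sphere_subset_puncturedDisc : sphere (0 : ℂ) 1 ⊆ puncturedDisc :=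
  fun _ hz => ⟨sphere_subset_closedBall hz, ne_of_mem_of_not_mem hz (by simp)⟩

theorem zero_mem_closure_puncturedDisc : (0 : ℂ) ∈ closure puncturedDisc :=
  mem_closure_of_tendsto (b := 𝓝[≠] (0 : ℂ)) (tendsto_nhdsWithin_of_tendsto_nhds tendsto_id)
    (sdiff_mem_nhdsWithin_compl (closedBall_mem_nhds 0 one_pos) _)

theorem not_isCompact_puncturedDisc : ¬ IsCompact puncturedDisc :=
  fun h => (h.isClosed.closure_subset zero_mem_closure_puncturedDisc).2 rfl

theorem MvPolynomial.differentiable_eval {𝕜 σ : Type*} [NontriviallyNormedField 𝕜] [CompleteSpace 𝕜]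
    [Fintype σ] (P : MvPolynomial σ 𝕜) : Differentiable 𝕜 fun x : σ → 𝕜 => MvPolynomial.eval x P :=
  fun x => ((AnalyticOnNhd.eval_mvPolynomial P) x (mem_univ x)).differentiableAt

/-- The polynomially convex hull of `K`, phrased through upper bounds `C` rather than `sSup`,
which avoids the junk value of `sSup` on an empty `K`. -/
def polynomialHull {σ : Type*} (K : Set (σ → ℂ)) : Set (σ → ℂ) :=
  {x | ∀ (P : MvPolynomial σ ℂ) (C : ℝ),
    (∀ z ∈ K, ‖MvPolynomial.eval z P‖ ≤ C) → ‖MvPolynomial.eval x P‖ ≤ C}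

theorem image_puncturedDisc_subset_polynomialHull {σ : Type*} [Fintype σ] {D : Set (σ → ℂ)}
    (hDb : IsBounded D) {h : ℂ → σ → ℂ} (hdiff : DifferentiableOn ℂ h (ball 0 1 \ {0}))
    (hcont : ContinuousOn h puncturedDisc) (hmaps : MapsTo h puncturedDisc D) :
    h '' puncturedDisc ⊆ polynomialHull (h '' sphere 0 1) := by
  rintro - ⟨w, hw, rfl⟩ P C hC
  have hP := MvPolynomial.differentiable_eval P
  have hbdd : BddAbove (norm ∘ (fun ζ => MvPolynomial.eval (h ζ) P) '' (ball 0 1 \ {0})) := by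
    refine (hDb.isCompact_closure.bddAbove_image (hP.continuous.norm.continuousOn)).mono ?_
    rintro - ⟨ζ, hζ, rfl⟩
    exact ⟨h ζ, subset_closure (hmaps (sdiff_subset_sdiff_left ball_subset_closedBall hζ)), rfl⟩
  exact norm_le_of_forall_mem_sphere_norm_le_of_bddAbove one_pos
    (hP.comp_differentiableOn hdiff) (hP.continuous.comp_continuousOn hcont) hbdd
    (fun z hz => hC _ (mem_image_of_mem h hz)) hw

theorem norm_le_of_forall_approx {X F : Type*} [SeminormedAddCommGroup F] {A : Set (X → F)}
    {K : Set X} {x : X} (hA : ∀ φ ∈ A, ∀ C, (∀ z ∈ K, ‖φ z‖ ≤ C) → ‖φ x‖ ≤ C) {f : X → F}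
    (happrox : ∀ ε > 0, ∃ φ ∈ A, ∀ z ∈ insert x K, ‖f z - φ z‖ ≤ ε)
    {C : ℝ} (hC : ∀ z ∈ K, ‖f z‖ ≤ C) : ‖f x‖ ≤ C := by
  refine le_of_forall_pos_le_add fun ε hε => ?_
  obtain ⟨φ, hφA, hφ⟩ := happrox (ε / 2) (half_pos hε)
  have hφK : ∀ z ∈ K, ‖φ z‖ ≤ C + ε / 2 := fun z hz =>
    calc ‖φ z‖ ≤ ‖f z‖ + ‖f z - φ z‖ := norm_le_norm_add_norm_sub _ _
      _ ≤ C + ε / 2 := add_le_add (hC z hz) (hφ z (mem_insert_of_mem x hz))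
  calc ‖f x‖ ≤ ‖φ x‖ + ‖f x - φ x‖ := norm_le_norm_add_norm_sub' _ _
    _ ≤ C + ε / 2 + ε / 2 := add_le_add (hA φ hφA _ hφK) (hφ x (mem_insert x K))
    _ = C + ε := by ring

theorem IsRunge.polynomialHull_subset {n : ℕ} {D : Set (Fin n → ℂ)} (hrunge : IsRunge n D)
    {K : Set (Fin n → ℂ)} (hKD : K ⊆ D) (hK : IsCompact K) :
    D ∩ polynomialHull K ⊆ {z ∈ D | ∀ f : (Fin n → ℂ) → ℂ, DifferentiableOn ℂ f D →
      ‖f z‖ ≤ sSup ((fun w => ‖f w‖) '' K)} := by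
  rintro x ⟨hxD, hx⟩
  refine ⟨hxD, fun f hf => ?_⟩
  have hbdd : BddAbove ((fun w => ‖f w‖) '' K) :=
    hK.bddAbove_image (hf.continuousOn.mono hKD).norm
  refine norm_le_of_forall_approx (A := range fun P z => MvPolynomial.eval z P) ?_ ?_
    fun z hz => le_csSup hbdd (mem_image_of_mem _ hz)
  · rintro - ⟨P, rfl⟩
    exact hx P
  · intro ε hε
    obtain ⟨P, hP⟩ := hrunge.2 f hf (insert x K) (insert_subset hxD hKD) (hK.insert x) ε hε
    exact ⟨_, mem_range_self P, hP⟩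

theorem runge_not_hasPDP_general (n : ℕ) (D : Set (Fin n → ℂ))
    (hDb : Bornology.IsBounded D) (hrunge : IsRunge n D) :
    ¬ HasPDP n D := by
  rintro ⟨h, hdiff, hcont, hmaps, hproper⟩
  have hKD : h '' sphere 0 1 ⊆ D := (hmaps.mono_left sphere_subset_puncturedDisc).image_subset
  have hK : IsCompact (h '' sphere 0 1) :=
    (isCompact_sphere 0 1).image_of_continuousOn (hcont.mono sphere_subset_puncturedDisc)
  set Khat := {z ∈ D | ∀ f : (Fin n → ℂ) → ℂ, DifferentiableOn ℂ f D →
    ‖f z‖ ≤ sSup ((fun w => ‖f w‖) '' (h '' sphere 0 1))}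
  have hsub : puncturedDisc ⊆ h ⁻¹' Khat := fun w hw =>
    hrunge.polynomialHull_subset hKD hK ⟨hmaps hw,
      image_puncturedDisc_subset_polynomialHull hDb hdiff hcont hmaps (mem_image_of_mem h hw)⟩
  have hcompact := hproper Khat (fun z hz => hz.1) (hrunge.1 _ hKD hK)
  rw [inter_eq_left.mpr hsub] at hcompact
  exact not_isCompact_puncturedDisc hcompact

/-- a bounded Runge domain does not have the punctured disc property. -/
theorem runge_not_hasPDP (n : ℕ) (D : Set (Fin n → ℂ))
    (hD : IsOpen D) (hDc : IsConnected D) (hDb : Bornology.IsBounded D)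
    (hrunge : IsRunge n D) :
    ¬ HasPDP n D :=
  runge_not_hasPDP_general n D hDb hrunge
end

section
/- Let D₁, D₂ be bounded domains in ℂⁿ, T : A^p(D₁) → A^p(D₂) a linear isometry, and suppose F is defined on a subset D₁' ⊂ D₁ by F(z) = w whenever there exists λ ∈ ℂ* with (Tφ)(w) = λφ(z) for all φ ∈ A^p(D₁). If zⱼ ∈ D₁' with zⱼ → z ∈ D₁ and F(zⱼ) → w ∈ D₂, then z ∈ D₁' and F(z) = w. -/
open MeasureTheory

/-- `T` is a linear isometry `A^p(D₁) → A^p(D₂)`: it maps `A^p(D₁)` into `A^p(D₂)`,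
is linear (on `D₂`, where values of elements of `A^p(D₂)` matter), norm preserving,
and surjective onto `A^p(D₂)`. -/
def IsApIsometry (n m : ℕ) (p : ℝ) (D₁ : Set (Fin n → ℂ)) (D₂ : Set (Fin m → ℂ))
    (T : ((Fin n → ℂ) → ℂ) → ((Fin m → ℂ) → ℂ)) : Prop :=
  (∀ φ, MemAp n p D₁ φ → MemAp m p D₂ (T φ)) ∧
  (∀ φ ψ, MemAp n p D₁ φ → MemAp n p D₁ ψ →
      ∀ w ∈ D₂, T (φ + ψ) w = T φ w + T ψ w) ∧
  (∀ (c : ℂ) φ, MemAp n p D₁ φ → ∀ w ∈ D₂, T (fun z => c * φ z) w = c * T φ w) ∧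
  (∀ φ, MemAp n p D₁ φ → apNorm m p D₂ (T φ) = apNorm n p D₁ φ) ∧
  (∀ ψ, MemAp m p D₂ ψ → ∃ φ, MemAp n p D₁ φ ∧ ∀ w ∈ D₂, T φ w = ψ w)

/-!
Testing the correspondence on the constant function `1` shows that the scalar attached to a
corresponding pair `(z, w)` is `(T 1)(w)`. Hence `(Tφ)(w_j) = (T 1)(w_j) φ(z_j)` for every
`φ ∈ A^p(D₁)`, and since elements of `A^p` are holomorphic, hence continuous, on open domains,
this identity passes to the limit `(z₀, w₀)`. The limiting scalar `(T 1)(w₀)` is nonzero because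
`T` is onto: some `φ` has `Tφ = 1` on `D₂`, so `(T 1)(w₀) φ(z₀) = 1`.
-/

open Filter Topology

section MemAp

variable {n : ℕ} {p : ℝ} {D : Set (Fin n → ℂ)} {φ : (Fin n → ℂ) → ℂ}

lemma memAp_const (hD : Bornology.IsBounded D) (c : ℂ) : MemAp n p D (fun _ => c) :=
  ⟨differentiableOn_const c, integrableOn_const hD.measure_lt_top.ne⟩

lemma MemAp.continuousAt (hφ : MemAp n p D φ) (hD : IsOpen D) {z : Fin n → ℂ} (hz : z ∈ D) :
    ContinuousAt φ z :=
  hφ.1.continuousOn.continuousAt (hD.mem_nhds hz)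

end MemAp

section Correspondence

variable {n m : ℕ} {p : ℝ} {D₁ : Set (Fin n → ℂ)} {D₂ : Set (Fin m → ℂ)}
  {T : ((Fin n → ℂ) → ℂ) → ((Fin m → ℂ) → ℂ)} {z : Fin n → ℂ} {w : Fin m → ℂ} {c : ℂ}

lemma eq_apply_one_of_forall_eq_mul (hD₁b : Bornology.IsBounded D₁)
    (hc : ∀ φ, MemAp n p D₁ φ → T φ w = c * φ z) : c = T (fun _ => 1) w := by
  simpa using (hc _ (memAp_const hD₁b 1)).symm

lemma IsApIsometry.ne_zero_of_forall_eq_mul (hT : IsApIsometry n m p D₁ D₂ T)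
    (hD₂b : Bornology.IsBounded D₂) (hw : w ∈ D₂)
    (hc : ∀ φ, MemAp n p D₁ φ → T φ w = c * φ z) : c ≠ 0 := by
  obtain ⟨-, -, -, -, hsurj⟩ := hT
  rintro rfl
  obtain ⟨φ, hφ, hTφ⟩ := hsurj _ (memAp_const hD₂b 1)
  simpa [hTφ w hw] using hc φ hφ

lemma eq_mul_of_forall_eq_mul_of_tendsto {X Y : Type*} [TopologicalSpace X] [TopologicalSpace Y]
    {f g : Y → ℂ} {h : X → ℂ} {x : ℕ → X} {y : ℕ → Y} {x₀ : X} {y₀ : Y}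
    (hf : ContinuousAt f y₀) (hg : ContinuousAt g y₀) (hh : ContinuousAt h x₀)
    (hx : Tendsto x atTop (𝓝 x₀)) (hy : Tendsto y atTop (𝓝 y₀))
    (heq : ∀ j, f (y j) = g (y j) * h (x j)) : f y₀ = g y₀ * h x₀ := by
  have hlim : Tendsto (fun j => g (y j) * h (x j)) atTop (𝓝 (g y₀ * h x₀)) :=
    (hg.tendsto.comp hy).mul (hh.tendsto.comp hx)
  have hflim : Tendsto (fun j => f (y j)) atTop (𝓝 (f y₀)) := hf.tendsto.comp hy
  simp only [heq] at hflim
  exact tendsto_nhds_unique hflim hlim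

lemma IsApIsometry.forall_eq_mul_of_tendsto (hT : IsApIsometry n m p D₁ D₂ T)
    (hD₁ : IsOpen D₁) (hD₁b : Bornology.IsBounded D₁) (hD₂ : IsOpen D₂)
    {zs : ℕ → Fin n → ℂ} {ws : ℕ → Fin m → ℂ}
    (hcorr : ∀ j, ∃ c : ℂ, ∀ φ, MemAp n p D₁ φ → T φ (ws j) = c * φ (zs j))
    (hz : z ∈ D₁) (hw : w ∈ D₂)
    (hzlim : Tendsto zs atTop (𝓝 z)) (hwlim : Tendsto ws atTop (𝓝 w)) :
    ∀ φ, MemAp n p D₁ φ → T φ w = T (fun _ => 1) w * φ z := by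
  intro φ hφ
  have hTmem : ∀ ψ, MemAp n p D₁ ψ → ContinuousAt (T ψ) w := fun ψ hψ =>
    (hT.1 ψ hψ).continuousAt hD₂ hw
  refine eq_mul_of_forall_eq_mul_of_tendsto (hTmem φ hφ) (hTmem _ (memAp_const hD₁b 1))
    (hφ.continuousAt hD₁ hz) hzlim hwlim fun j => ?_
  obtain ⟨c, hc⟩ := hcorr j
  rw [hc φ hφ, eq_apply_one_of_forall_eq_mul hD₁b hc]

end Correspondence

theorem correspondence_closed_general (n : ℕ)
    (D₁ D₂ : Set (Fin n → ℂ))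
    (hD₁ : IsOpen D₁) (hD₁b : Bornology.IsBounded D₁)
    (hD₂ : IsOpen D₂) (hD₂b : Bornology.IsBounded D₂)
    (p : ℝ)
    (T : ((Fin n → ℂ) → ℂ) → ((Fin n → ℂ) → ℂ))
    (hT : IsApIsometry n n p D₁ D₂ T)
    (z : ℕ → Fin n → ℂ) (w : ℕ → Fin n → ℂ)
    (hcorr : ∀ j, ∃ lam : ℂ, lam ≠ 0 ∧
      ∀ φ, MemAp n p D₁ φ → T φ (w j) = lam * φ (z j))
    (z₀ : Fin n → ℂ) (hz₀ : z₀ ∈ D₁) (w₀ : Fin n → ℂ) (hw₀ : w₀ ∈ D₂)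
    (hzlim : Filter.Tendsto z Filter.atTop (nhds z₀))
    (hwlim : Filter.Tendsto w Filter.atTop (nhds w₀)) :
    ∃ lam : ℂ, lam ≠ 0 ∧ ∀ φ, MemAp n p D₁ φ → T φ w₀ = lam * φ z₀ := by
  have hlim := hT.forall_eq_mul_of_tendsto hD₁ hD₁b hD₂
    (fun j => (hcorr j).imp fun _ h => h.2) hz₀ hw₀ hzlim hwlim
  exact ⟨_, hT.ne_zero_of_forall_eq_mul hD₂b hw₀ hlim, hlim⟩

/-- the correspondence `F` induced by a linear isometry
`T : A^p(D₁) → A^p(D₂)` (defined by `F(z) = w` iff evaluation at `w` composed with `T`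
is a nonzero multiple of evaluation at `z`) is closed: limits of corresponding pairs
inside `D₁ × D₂` still correspond. -/
theorem correspondence_closed (n : ℕ)
    (D₁ D₂ : Set (Fin n → ℂ))
    (hD₁ : IsOpen D₁) (hD₁c : IsConnected D₁) (hD₁b : Bornology.IsBounded D₁)
    (hD₂ : IsOpen D₂) (hD₂c : IsConnected D₂) (hD₂b : Bornology.IsBounded D₂)
    (p : ℝ) (hp : 0 < p)
    (T : ((Fin n → ℂ) → ℂ) → ((Fin n → ℂ) → ℂ))
    (hT : IsApIsometry n n p D₁ D₂ T)
    (z : ℕ → Fin n → ℂ) (w : ℕ → Fin n → ℂ)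
    (hzD : ∀ j, z j ∈ D₁) (hwD : ∀ j, w j ∈ D₂)
    (hcorr : ∀ j, ∃ lam : ℂ, lam ≠ 0 ∧
      ∀ φ, MemAp n p D₁ φ → T φ (w j) = lam * φ (z j))
    (z₀ : Fin n → ℂ) (hz₀ : z₀ ∈ D₁) (w₀ : Fin n → ℂ) (hw₀ : w₀ ∈ D₂)
    (hzlim : Filter.Tendsto z Filter.atTop (nhds z₀))
    (hwlim : Filter.Tendsto w Filter.atTop (nhds w₀)) :
    ∃ lam : ℂ, lam ≠ 0 ∧ ∀ φ, MemAp n p D₁ φ → T φ w₀ = lam * φ z₀ :=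
  correspondence_closed_general n D₁ D₂ hD₁ hD₁b hD₂ hD₂b p T hT z w hcorr z₀ hz₀ w₀ hw₀ hzlim hwlim
end

section
/- Let D₁, D₂ be bounded domains in ℂⁿ that are glued along a biholomorphism F : D₁∖A₁ → D₂∖A₂, where Aᵢ ⊂ Dᵢ are closed sets, and suppose that the extension F₁ : D₁ → ℂⁿ of F satisfies F₁(A₁) ⊂ ∂D₂ and the extension F₂ : D₂ → ℂⁿ of F⁻¹ satisfies F₂(A₂) ⊂ ∂D₁. Then the glued topological space D₁ ⊔_F D₂ (identify z ∈ D₁∖A₁ with F(z) ∈ D₂∖A₂) is Hausdorff. -/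
/-!
The map `inl z ↦ (z, F₁ z)`, `inr w ↦ (F₂ w, w)` from `D₁ ⊔ D₂` to `ℂⁿ × ℂⁿ` is continuous and
identifies exactly the glued points: if `(z, F₁ z) = (F₂ w, w)` then `F₁ z = w ∈ D₂`, so `z ∉ A₁`
because `F₁` sends `A₁` into `∂D₂`, which misses the open set `D₂`. Hence the glued space injects
continuously into a Hausdorff space.
-/

/-- The relation gluing `z ∈ D₁ ∖ A₁` with `F z ∈ D₂ ∖ A₂`. -/
def glueRel (n : ℕ) (D₁ D₂ A₁ : Set (Fin n → ℂ))
    (F : (Fin n → ℂ) → (Fin n → ℂ)) :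
    (↥D₁ ⊕ ↥D₂) → (↥D₁ ⊕ ↥D₂) → Prop :=
  fun x y =>
    match x, y with
    | Sum.inl z, Sum.inr w => (z : Fin n → ℂ) ∈ D₁ \ A₁ ∧ (w : Fin n → ℂ) = F z
    | _, _ => False

/-- The setoid on `D₁ ⊔ D₂` generated by the gluing relation. -/
def glueSetoid (n : ℕ) (D₁ D₂ A₁ : Set (Fin n → ℂ))
    (F : (Fin n → ℂ) → (Fin n → ℂ)) : Setoid (↥D₁ ⊕ ↥D₂) :=
  ⟨Relation.EqvGen (glueRel n D₁ D₂ A₁ F),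
    Relation.EqvGen.is_equivalence _⟩

theorem t2Space_quotient_ker {X Y : Type*} [TopologicalSpace X] [TopologicalSpace Y] [T2Space Y]
    {f : X → Y} (hf : Continuous f) : T2Space (Quotient (Setoid.ker f)) :=
  .of_injective_continuous (Setoid.kerLift_injective f) (hf.quotient_lift fun _ _ ↦ id)

section Glue

variable {n : ℕ} {D₁ D₂ A₁ : Set (Fin n → ℂ)} {F₁ F₂ : (Fin n → ℂ) → (Fin n → ℂ)}

def glueGraph (D₁ D₂ : Set (Fin n → ℂ)) (F₁ F₂ : (Fin n → ℂ) → (Fin n → ℂ)) :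
    (↥D₁ ⊕ ↥D₂) → (Fin n → ℂ) × (Fin n → ℂ) :=
  Sum.elim (fun z ↦ ((z : Fin n → ℂ), F₁ z)) (fun w ↦ (F₂ w, (w : Fin n → ℂ)))

theorem continuous_glueGraph (hF₁c : ContinuousOn F₁ D₁) (hF₂c : ContinuousOn F₂ D₂) :
    Continuous (glueGraph D₁ D₂ F₁ F₂) :=
  (continuous_subtype_val.prodMk hF₁c.domRestrict).sumElim
    (hF₂c.domRestrict.prodMk continuous_subtype_val)

theorem glueGraph_eq_of_glueRel (hinv₁ : ∀ z ∈ D₁ \ A₁, F₂ (F₁ z) = z)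
    {a b : ↥D₁ ⊕ ↥D₂} (h : glueRel n D₁ D₂ A₁ F₁ a b) :
    glueGraph D₁ D₂ F₁ F₂ a = glueGraph D₁ D₂ F₁ F₂ b := by
  match a, b, h with
  | .inl z, .inr w, ⟨hz, hw⟩ => simp [glueGraph, hw, hinv₁ z hz]

theorem glueRel_of_glueGraph_inl_eq_inr (hD₂ : IsOpen D₂) (hbd₁ : F₁ '' A₁ ⊆ frontier D₂)
    {z : ↥D₁} {w : ↥D₂} (h : glueGraph D₁ D₂ F₁ F₂ (.inl z) = glueGraph D₁ D₂ F₁ F₂ (.inr w)) :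
    glueRel n D₁ D₂ A₁ F₁ (.inl z) (.inr w) := by
  have hw : F₁ z = w := congrArg Prod.snd h
  refine ⟨⟨z.2, fun hzA ↦ ?_⟩, hw.symm⟩
  have hfr : F₁ z ∈ frontier D₂ := hbd₁ ⟨z, hzA, rfl⟩
  rw [hw, hD₂.frontier_eq] at hfr
  exact hfr.2 w.2

theorem glueSetoid_eq_ker_glueGraph (hD₂ : IsOpen D₂) (hinv₁ : ∀ z ∈ D₁ \ A₁, F₂ (F₁ z) = z)
    (hbd₁ : F₁ '' A₁ ⊆ frontier D₂) :
    glueSetoid n D₁ D₂ A₁ F₁ = Setoid.ker (glueGraph D₁ D₂ F₁ F₂) := by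
  refine le_antisymm (Setoid.eqvGen_le fun _ _ ↦ glueGraph_eq_of_glueRel hinv₁) ?_
  rintro (z | w) (z' | w') h
  · exact Subtype.ext (congrArg Prod.fst h) ▸ .refl _
  · exact .rel _ _ (glueRel_of_glueGraph_inl_eq_inr hD₂ hbd₁ h)
  · exact .symm _ _ (.rel _ _ (glueRel_of_glueGraph_inl_eq_inr hD₂ hbd₁ h.symm))
  · exact Subtype.ext (congrArg Prod.snd h) ▸ .refl _

end Glue

theorem glued_space_hausdorff_general (n : ℕ)
    (D₁ D₂ : Set (Fin n → ℂ))
    (hD₂ : IsOpen D₂)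
    (A₁ : Set (Fin n → ℂ))
    (F₁ F₂ : (Fin n → ℂ) → (Fin n → ℂ))
    (hF₁c : ContinuousOn F₁ D₁) (hF₂c : ContinuousOn F₂ D₂)
    (hinv₁ : ∀ z ∈ D₁ \ A₁, F₂ (F₁ z) = z)
    (hbd₁ : F₁ '' A₁ ⊆ frontier D₂) :
    T2Space (Quotient (glueSetoid n D₁ D₂ A₁ F₁)) := by
  rw [glueSetoid_eq_ker_glueGraph hD₂ hinv₁ hbd₁]
  exact t2Space_quotient_ker (continuous_glueGraph hF₁c hF₂c)

/-- gluing two bounded domains `D₁, D₂ ⊆ ℂⁿ` along a biholomorphism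
`F : D₁ ∖ A₁ → D₂ ∖ A₂` whose extension `F₁ : D₁ → ℂⁿ` maps `A₁` into `∂D₂` and whose
inverse's extension `F₂ : D₂ → ℂⁿ` maps `A₂` into `∂D₁` produces a Hausdorff space. -/
theorem glued_space_hausdorff (n : ℕ)
    (D₁ D₂ : Set (Fin n → ℂ))
    (hD₁ : IsOpen D₁) (hD₁c : IsConnected D₁) (hD₁b : Bornology.IsBounded D₁)
    (hD₂ : IsOpen D₂) (hD₂c : IsConnected D₂) (hD₂b : Bornology.IsBounded D₂)
    (A₁ A₂ : Set (Fin n → ℂ))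
    (hA₁ : A₁ ⊆ D₁) (hA₂ : A₂ ⊆ D₂)
    (hA₁cl : closure A₁ ∩ D₁ ⊆ A₁) (hA₂cl : closure A₂ ∩ D₂ ⊆ A₂)
    (F₁ F₂ : (Fin n → ℂ) → (Fin n → ℂ))
    (hF₁c : ContinuousOn F₁ D₁) (hF₂c : ContinuousOn F₂ D₂)
    (hbij : Set.BijOn F₁ (D₁ \ A₁) (D₂ \ A₂))
    (hinv₁ : ∀ z ∈ D₁ \ A₁, F₂ (F₁ z) = z)
    (hinv₂ : ∀ w ∈ D₂ \ A₂, F₁ (F₂ w) = w)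
    (hbd₁ : F₁ '' A₁ ⊆ frontier D₂) (hbd₂ : F₂ '' A₂ ⊆ frontier D₁) :
    T2Space (Quotient (glueSetoid n D₁ D₂ A₁ F₁)) :=
  glued_space_hausdorff_general n D₁ D₂ hD₂ A₁ F₁ F₂ hF₁c hF₂c hinv₁ hbd₁
end
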